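/- arXiv:2202.06573 — 2 statements merged into one kernel-verified Lean document; each statement's English description precedes it below -/
import Mathlib

section
/- Let M' be a C^∞(V)-submodule of C^∞(V)^r and let G be a finite group acting on V by diffeomorphisms, acting diagonally on C^∞(V)^r. If M' is generated by finitely many G-invariant elements f_1,...,f_k, then the C^∞(V)^G-submodule M of (C^∞(V)^G)^r generated by f_1,...,f_k satisfies M = M' ∩ (C^∞(V)^G)^r. -/
/-!
Average over `G`: `c ↦ |G|⁻¹ ∑_g c (g • ·)` is linear, keeps smooth functions smooth, has invariant
values, fixes invariant functions, and commutes with multiplication by invariant functions.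
Averaging both sides of an invariant `m = ∑ cᵢ fᵢ` with invariant `fᵢ` therefore gives
`m = ∑ avg(cᵢ) fᵢ`, with smooth invariant coefficients.
-/

open scoped Manifold

section GroupAverage

variable (G : Type*) {X : Type*} (𝕜 : Type*) {W : Type*} [Group G] [Fintype G] [MulAction G X]
  [Field 𝕜] [AddCommGroup W] [Module 𝕜 W]

noncomputable def groupAverage : (X → W) →ₗ[𝕜] (X → W) where
  toFun c x := (Fintype.card G : 𝕜)⁻¹ • ∑ g : G, c (g • x)
  map_add' c d := by
    funext x
    simp only [Pi.add_apply, Finset.sum_add_distrib, smul_add]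
  map_smul' a c := by
    funext x
    simp only [Pi.smul_apply, RingHom.id_apply, ← Finset.smul_sum, smul_comm a]

variable {G 𝕜}

theorem groupAverage_apply (c : X → W) (x : X) :
    groupAverage G 𝕜 c x = (Fintype.card G : 𝕜)⁻¹ • ∑ g : G, c (g • x) :=
  rfl

theorem groupAverage_smul_apply (c : X → W) (g : G) (x : X) :
    groupAverage G 𝕜 c (g • x) = groupAverage G 𝕜 c x := by
  simp only [groupAverage_apply, ← mul_smul]
  congr 1
  exact Fintype.sum_equiv (Equiv.mulRight g) _ _ fun _ => rfl

theorem groupAverage_eq_self [CharZero 𝕜] {m : X → W} (hm : ∀ (g : G) x, m (g • x) = m x) :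
    groupAverage G 𝕜 m = m := by
  funext x
  have hcard : (Fintype.card G : 𝕜) ≠ 0 := Nat.cast_ne_zero.2 Fintype.card_ne_zero
  simp only [groupAverage_apply, hm, Finset.sum_const, Finset.card_univ,
    ← Nat.cast_smul_eq_nsmul 𝕜, smul_smul, inv_mul_cancel₀ hcard, one_smul]

theorem groupAverage_smul_of_invariant (c : X → 𝕜) {f : X → W}
    (hf : ∀ (g : G) x, f (g • x) = f x) :
    groupAverage G 𝕜 (fun x => c x • f x) = fun x => groupAverage G 𝕜 c x • f x := by
  funext x
  simp only [groupAverage_apply, hf, ← Finset.sum_smul, smul_eq_mul, mul_smul]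

theorem sum_groupAverage_smul_of_invariant [CharZero 𝕜] {ι : Type*} (s : Finset ι)
    (c : ι → X → 𝕜) {f : ι → X → W} (hf : ∀ i (g : G) x, f i (g • x) = f i x)
    (hm : ∀ (g : G) x, ∑ i ∈ s, c i (g • x) • f i (g • x) = ∑ i ∈ s, c i x • f i x) :
    (fun x => ∑ i ∈ s, groupAverage G 𝕜 (c i) x • f i x) = fun x => ∑ i ∈ s, c i x • f i x := by
  calc (fun x => ∑ i ∈ s, groupAverage G 𝕜 (c i) x • f i x)
      = ∑ i ∈ s, groupAverage G 𝕜 (fun x => c i x • f i x) := by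
        funext x
        simp only [groupAverage_smul_of_invariant _ (hf _), Finset.sum_apply]
    _ = groupAverage G 𝕜 (fun x => ∑ i ∈ s, c i x • f i x) := by
        rw [← map_sum]
        congr 1
        funext x
        simp only [Finset.sum_apply]
    _ = fun x => ∑ i ∈ s, c i x • f i x := groupAverage_eq_self hm

end GroupAverage

theorem ContMDiff.groupAverage {E : Type*} [NormedAddCommGroup E] [NormedSpace ℝ E]
    {H : Type*} [TopologicalSpace H] {I : ModelWithCorners ℝ E H}
    {V : Type*} [TopologicalSpace V] [ChartedSpace H V]
    {G : Type*} [Group G] [Fintype G] [MulAction G V] {n : WithTop ℕ∞}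
    {𝕜 : Type*} [Field 𝕜] {W : Type*} [NormedAddCommGroup W] [NormedSpace ℝ W] [Module 𝕜 W]
    (hact : ∀ g : G, ContMDiff I I n (fun v : V => g • v)) {c : V → W}
    (hc : ContMDiff I 𝓘(ℝ, W) n c) :
    ContMDiff I 𝓘(ℝ, W) n (groupAverage G 𝕜 c) := by
  have hsum : ContMDiff I 𝓘(ℝ, W) n fun v => ∑ g : G, c (g • v) :=
    contMDiff_finsetSum fun g _ => hc.comp (hact g)
  have hscale : ContMDiff I 𝓘(ℝ, W) n fun v => (Fintype.card G : ℝ)⁻¹ • ∑ g : G, c (g • v) :=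
    (contDiff_const_smul _).contMDiff.comp hsum
  convert hscale using 2 with v
  exact inv_natCast_smul_eq 𝕜 ℝ _ _

theorem invariant_generators_intersection_general
    {E : Type*} [NormedAddCommGroup E] [NormedSpace ℝ E]
    {H : Type*} [TopologicalSpace H] (I : ModelWithCorners ℝ E H)
    {V : Type*} [TopologicalSpace V] [ChartedSpace H V]
    {G : Type*} [Group G] [Fintype G] [MulAction G V]
    (hact : ∀ g : G, ContMDiff I I (⊤ : ℕ∞) (fun v : V => g • v))
    (r k : ℕ) (f : Fin k → V → (Fin r → ℂ))
    (hinv : ∀ (i : Fin k) (g : G) (v : V), f i (g • v) = f i v)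
    (M' : Set (V → Fin r → ℂ))
    (hM' : M' = {m | ∃ c : Fin k → V → ℂ,
      (∀ i, ContMDiff I 𝓘(ℝ, ℂ) (⊤ : ℕ∞) (c i)) ∧
      m = fun v j => ∑ i, c i v * f i v j})
    (M : Set (V → Fin r → ℂ))
    (hM : M = {m | ∃ c : Fin k → V → ℂ,
      (∀ i, ContMDiff I 𝓘(ℝ, ℂ) (⊤ : ℕ∞) (c i) ∧ ∀ (g : G) (v : V), c i (g • v) = c i v) ∧
      m = fun v j => ∑ i, c i v * f i v j}) :
    M = M' ∩ {m | ∀ (g : G) (v : V), m (g • v) = m v} := by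
  have hcomb : ∀ c : Fin k → V → ℂ,
      (fun v j => ∑ i, c i v * f i v j) = fun v => ∑ i, c i v • f i v := by
    intro c
    funext v j
    simp only [Finset.sum_apply, Pi.smul_apply, smul_eq_mul]
  subst hM hM'
  ext m
  simp only [Set.mem_ofPred_eq, Set.mem_inter_iff, hcomb]
  constructor
  · rintro ⟨c, hc, rfl⟩
    exact ⟨⟨c, fun i => (hc i).1, rfl⟩, fun g v => by simp only [(hc _).2 g v, hinv _ g v]⟩
  · rintro ⟨⟨c, hc, rfl⟩, hm⟩
    exact ⟨fun i => groupAverage G ℂ (c i),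
      fun i => ⟨(hc i).groupAverage hact, groupAverage_smul_apply (c i)⟩,
      (sum_groupAverage_smul_of_invariant _ c hinv hm).symm⟩

/-- Let `M'` be a `C^∞(V)`-submodule of `C^∞(V)^r` generated by finitely many
`G`-invariant elements `f_1, ..., f_k` (smooth functions `V → ℂ^r`). Then the
`C^∞(V)^G`-submodule `M` of `(C^∞(V)^G)^r` generated by `f_1, ..., f_k` satisfies
`M = M' ∩ (C^∞(V)^G)^r`. -/
theorem invariant_generators_intersection
    {E : Type*} [NormedAddCommGroup E] [NormedSpace ℝ E]
    {H : Type*} [TopologicalSpace H] (I : ModelWithCorners ℝ E H)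
    {V : Type*} [TopologicalSpace V] [ChartedSpace H V] [IsManifold I ((⊤ : ℕ∞) : WithTop ℕ∞) V]
    {G : Type*} [Group G] [Fintype G] [MulAction G V]
    (hact : ∀ g : G, ContMDiff I I (⊤ : ℕ∞) (fun v : V => g • v))
    (r k : ℕ) (f : Fin k → V → (Fin r → ℂ))
    (hsmooth : ∀ (i : Fin k) (j : Fin r), ContMDiff I 𝓘(ℝ, ℂ) (⊤ : ℕ∞) (fun v => f i v j))
    (hinv : ∀ (i : Fin k) (g : G) (v : V), f i (g • v) = f i v)
    (M' : Set (V → Fin r → ℂ))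
    (hM' : M' = {m | ∃ c : Fin k → V → ℂ,
      (∀ i, ContMDiff I 𝓘(ℝ, ℂ) (⊤ : ℕ∞) (c i)) ∧
      m = fun v j => ∑ i, c i v * f i v j})
    (M : Set (V → Fin r → ℂ))
    (hM : M = {m | ∃ c : Fin k → V → ℂ,
      (∀ i, ContMDiff I 𝓘(ℝ, ℂ) (⊤ : ℕ∞) (c i) ∧ ∀ (g : G) (v : V), c i (g • v) = c i v) ∧
      m = fun v j => ∑ i, c i v * f i v j}) :
    M = M' ∩ {m | ∀ (g : G) (v : V), m (g • v) = m v} :=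
  invariant_generators_intersection_general I hact r k f hinv M' hM' M hM
end

section
/- Let G be a finite group and let R ⊆ S be commutative rings with G acting on S by ring automorphisms such that R = S^G and R is a direct summand of S as an R-module via the averaging projection p_G = |G|^{-1} Σ_{g∈G} g (assuming |G| is invertible in S). If N' is an S-submodule of S^r generated by finitely many G-invariant elements f_1,...,f_k, then the R-submodule of R^r generated by f_1,...,f_k equals N' ∩ R^r. -/
/-- Let `G` be a finite group acting on a commutative ring `S` by ring
automorphisms, with `|G|` invertible in `S`, and let `R = S^G` be the invariant subring
(a direct summand of `S` via the averaging projection). If `N'` is an `S`-submodule of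
`S^r` generated by finitely many `G`-invariant elements `f_1, ..., f_k`, then the
`R`-submodule of `R^r` generated by `f_1, ..., f_k` equals `N' ∩ R^r`. -/
theorem invariant_generators_intersection_ring
    {S : Type*} [CommRing S] {G : Type*} [Group G] [Fintype G] [MulSemiringAction G S]
    (hcard : IsUnit ((Fintype.card G : S)))
    (r k : ℕ) (f : Fin k → (Fin r → S))
    (hinv : ∀ (i : Fin k) (g : G) (j : Fin r), g • f i j = f i j)
    (N' : Submodule S (Fin r → S)) (hN' : N' = Submodule.span S (Set.range f)) :
    {x : Fin r → S | ∃ c : Fin k → S, (∀ (i : Fin k) (g : G), g • c i = c i) ∧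
        x = ∑ i, c i • f i}
      = (N' : Set (Fin r → S)) ∩ {x | ∀ (j : Fin r) (g : G), g • x j = x j} := by
  subst hN'
  ext x
  simp only [Set.mem_setOf_eq, Set.mem_inter_iff, SetLike.mem_coe]
  constructor
  · rintro ⟨c, hc, rfl⟩
    refine ⟨Submodule.sum_mem _ fun i _ =>
      Submodule.smul_mem _ _ (Submodule.subset_span ⟨i, rfl⟩), ?_⟩
    intro j g
    simp only [Finset.sum_apply, Pi.smul_apply, smul_eq_mul]
    rw [Finset.smul_sum]
    simp only [smul_mul', hc, hinv]
  · rintro ⟨hx, hxinv⟩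
    rw [Submodule.mem_span_range_iff_exists_fun] at hx
    obtain ⟨d, hd⟩ := hx
    obtain ⟨u, hu⟩ := hcard
    have huinv : ∀ g : G, g • ((↑u⁻¹ : S)) = ↑u⁻¹ := by
      intro g
      have h1 : ((↑u⁻¹ : S)) * (Fintype.card G : S) = 1 := by
        rw [← hu]; exact u.inv_mul
      have hcardinv : g • ((Fintype.card G : S)) = (Fintype.card G : S) :=
        map_natCast (MulSemiringAction.toRingHom G S g) _
      have h2 : (g • ((↑u⁻¹ : S))) * (Fintype.card G : S) = 1 := by
        have := congrArg (g • ·) h1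
        simpa [smul_mul', hcardinv] using this
      calc g • ((↑u⁻¹ : S)) = (g • ((↑u⁻¹ : S))) * ((Fintype.card G : S) * ↑u⁻¹) := by
            rw [mul_comm (Fintype.card G : S), h1, mul_one]
        _ = ↑u⁻¹ := by rw [← mul_assoc, h2, one_mul]
    refine ⟨fun i => (↑u⁻¹ : S) * ∑ g : G, g • d i, ?_, ?_⟩
    · intro i g
      rw [smul_mul', huinv, Finset.smul_sum]
      congr 1
      exact Fintype.sum_equiv (Equiv.mulLeft g) _ _ (fun h => (mul_smul g h (d i)).symm)
    · funext j
      have hdj : ∀ g : G, (∑ i, (g • d i) * f i j) = g • x j := by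
        intro g
        have := congrFun hd j
        simp only [Finset.sum_apply, Pi.smul_apply, smul_eq_mul] at this
        rw [← this, Finset.smul_sum]
        exact Finset.sum_congr rfl fun i _ => by rw [smul_mul', hinv]
      have hcu : ((↑u⁻¹ : S)) * (Fintype.card G : S) = 1 := by
        rw [← hu]; exact u.inv_mul
      simp only [Finset.sum_apply, Pi.smul_apply, smul_eq_mul]
      symm
      calc ∑ i, ((↑u⁻¹ : S) * ∑ g : G, g • d i) * f i j
          = (↑u⁻¹ : S) * ∑ i, (∑ g : G, g • d i) * f i j := by
            rw [Finset.mul_sum]; exact Finset.sum_congr rfl fun i _ => by ring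
        _ = (↑u⁻¹ : S) * ∑ g : G, ∑ i, (g • d i) * f i j := by
            rw [Finset.sum_comm]
            congr 1
            exact Finset.sum_congr rfl fun i _ => by rw [Finset.sum_mul]
        _ = (↑u⁻¹ : S) * ∑ g : G, g • x j := by
            congr 1; exact Finset.sum_congr rfl fun g _ => hdj g
        _ = (↑u⁻¹ : S) * ∑ _g : G, x j := by
            congr 1; exact Finset.sum_congr rfl fun g _ => hxinv j g
        _ = x j := by
            rw [Finset.sum_const, Finset.card_univ, nsmul_eq_mul, ← mul_assoc, hcu, one_mul]
end
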